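/- For a finite-dimensional Kac algebra H and any x ∈ H, one has F(x₁) · F(x₂) = δ · F(x) in H*, where the product is taken in H* and δ = √(dim H). -/
import Mathlib


/- STATEMENT 5: For a finite-dimensional Kac algebra H and any x ∈ H, one has
F(x₁) · F(x₂) = δ · F(x) in H* (product in H*), where F = F_H is the Fourier transform
F(a) = δ φ₁(a) φ₂ and δ = √(dim H). -/

open scoped TensorProduct

noncomputable section

variable {H : Type*} [Ring H] [HopfAlgebra ℂ H]

/-- Convolution product on the dual of `H`, as a linear map on the tensor square. -/
def dmulT : Module.Dual ℂ H ⊗[ℂ] Module.Dual ℂ H →ₗ[ℂ] Module.Dual ℂ H :=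
  (Coalgebra.comul (R := ℂ) (A := H)).dualMap ∘ₗ TensorProduct.dualDistrib ℂ H H

/-- Comultiplication on the dual of `H` (dual to the multiplication of `H`). -/
def dComul [FiniteDimensional ℂ H] :
    Module.Dual ℂ H →ₗ[ℂ] Module.Dual ℂ H ⊗[ℂ] Module.Dual ℂ H :=
  (TensorProduct.dualDistribEquiv ℂ H H).symm.toLinearMap ∘ₗ (LinearMap.mul' ℂ H).dualMap

/-- The Fourier transform `F_H : H → H*`, `a ↦ δ φ₁(a) φ₂`, where `δ = √(dim H)` and `φ` is the
idempotent integral of `H*`. -/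
def FH [FiniteDimensional ℂ H] (φ : Module.Dual ℂ H) : H →ₗ[ℂ] Module.Dual ℂ H :=
  (Real.sqrt (Module.finrank ℂ H) : ℂ) •
    ((TensorProduct.lid ℂ (Module.Dual ℂ H)).toLinearMap
      ∘ₗ TensorProduct.map (contractRight ℂ H) LinearMap.id
      ∘ₗ (TensorProduct.assoc ℂ H (Module.Dual ℂ H) (Module.Dual ℂ H)).symm.toLinearMap
      ∘ₗ (TensorProduct.mk ℂ H (Module.Dual ℂ H ⊗[ℂ] Module.Dual ℂ H)).flip (dComul φ))

/-- The Fourier transform `F_{H*} : H* → H`, `f ↦ δ f(h₁) h₂`, where `δ = √(dim H)` and `h` is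
the idempotent integral of `H`. -/
def FK (h : H) : Module.Dual ℂ H →ₗ[ℂ] H :=
  (Real.sqrt (Module.finrank ℂ H) : ℂ) •
    ((TensorProduct.lid ℂ H).toLinearMap
      ∘ₗ TensorProduct.map (contractLeft ℂ H) LinearMap.id
      ∘ₗ (TensorProduct.assoc ℂ (Module.Dual ℂ H) H H).symm.toLinearMap
      ∘ₗ (TensorProduct.mk ℂ (Module.Dual ℂ H) (H ⊗[ℂ] H)).flip (Coalgebra.comul (R := ℂ) h))


set_option synthInstance.maxHeartbeats 1000000
set_option maxHeartbeats 2000000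

lemma dualDistrib_dComul [FiniteDimensional ℂ H] (φ : Module.Dual ℂ H) :
    TensorProduct.dualDistrib ℂ H H (dComul φ) = (LinearMap.mul' ℂ H).dualMap φ := by
  have : ∀ t : Module.Dual ℂ H ⊗[ℂ] Module.Dual ℂ H,
      TensorProduct.dualDistrib ℂ H H t = TensorProduct.dualDistribEquiv ℂ H H t := by
    intro t
    simp [TensorProduct.dualDistribEquiv, TensorProduct.dualDistribEquivOfBasis]
  rw [dComul]
  simp only [LinearMap.coe_comp, Function.comp_apply, LinearEquiv.coe_coe, this,
    LinearEquiv.apply_symm_apply]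

lemma FH_apply_apply [FiniteDimensional ℂ H] (φ : Module.Dual ℂ H) (a b : H) :
    FH φ a b = (Real.sqrt (Module.finrank ℂ H) : ℂ) * φ (a * b) := by
  have key : ∀ ψ : Module.Dual ℂ H ⊗[ℂ] Module.Dual ℂ H,
      ((TensorProduct.lid ℂ (Module.Dual ℂ H)).toLinearMap
        (TensorProduct.map (contractRight ℂ H) LinearMap.id
          ((TensorProduct.assoc ℂ H (Module.Dual ℂ H) (Module.Dual ℂ H)).symm
            (a ⊗ₜ ψ)))) b = TensorProduct.dualDistrib ℂ H H ψ (a ⊗ₜ b) := by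
    intro ψ
    induction ψ using TensorProduct.induction_on with
    | zero => simp
    | tmul f g => simp [mul_comm]
    | add u v hu hv =>
        simp only [TensorProduct.tmul_add, map_add, LinearMap.add_apply, hu, hv]
  have := key (dComul φ)
  rw [dualDistrib_dComul] at this
  simp only [FH, LinearMap.smul_apply, LinearMap.coe_comp, Function.comp_apply,
    LinearMap.flip_apply, TensorProduct.mk_apply, LinearEquiv.coe_coe, smul_eq_mul] at *
  rw [this]
  simp [LinearMap.dualMap_apply]

lemma dmulT_apply' (t : Module.Dual ℂ H ⊗[ℂ] Module.Dual ℂ H) (y : H) :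
    dmulT t y = TensorProduct.dualDistrib ℂ H H t (Coalgebra.comul (R := ℂ) y) := rfl

lemma dualDistrib_map_FH_mul [FiniteDimensional ℂ H] (φ : Module.Dual ℂ H) (t u : H ⊗[ℂ] H) :
    TensorProduct.dualDistrib ℂ H H (TensorProduct.map (FH φ) (FH φ) t) u
      = ((Real.sqrt (Module.finrank ℂ H) : ℂ) * (Real.sqrt (Module.finrank ℂ H) : ℂ))
        * TensorProduct.dualDistrib ℂ H H (φ ⊗ₜ φ) (t * u) := by
  induction t using TensorProduct.induction_on with
  | zero => simp
  | add v w hv hw => simp only [map_add, LinearMap.add_apply, add_mul, hv, hw, mul_add]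
  | tmul a b =>
    induction u using TensorProduct.induction_on with
    | zero => simp
    | add v w hv hw => simp only [map_add, mul_add, hv, hw]
    | tmul c d =>
      simp only [TensorProduct.map_tmul, TensorProduct.dualDistrib_apply,
        Algebra.TensorProduct.tmul_mul_tmul, FH_apply_apply]
      ring

theorem fourier_of_comul_eq_conv
    [StarRing H] [StarModule ℂ H] [FiniteDimensional ℂ H]
    (h : H) (φ : Module.Dual ℂ H)
    (hne : h ≠ 0)
    (hint1 : ∀ x : H, x * h = Coalgebra.counit (R := ℂ) x • h)
    (hint2 : ∀ x : H, h * x = Coalgebra.counit (R := ℂ) x • h)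
    (hch : Coalgebra.counit (R := ℂ) h = 1)
    (hφne : φ ≠ 0)
    (hφ1 : ∀ f : Module.Dual ℂ H, dmulT (f ⊗ₜ φ) = f 1 • φ)
    (hφ2 : ∀ f : Module.Dual ℂ H, dmulT (φ ⊗ₜ f) = f 1 • φ)
    (hφone : φ 1 = 1)
    (hnorm : φ h = (Module.finrank ℂ H : ℂ)⁻¹)
    (hSS : ∀ x : H, HopfAlgebra.antipode (R := ℂ) (HopfAlgebra.antipode (R := ℂ) x) = x)
    (hSstar : ∀ x : H,
      HopfAlgebra.antipode (R := ℂ) (star (HopfAlgebra.antipode (R := ℂ) (star x))) = x) :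
    -- F(x₁) F(x₂) = δ F(x):
    ∀ x : H,
      dmulT (TensorProduct.map (FH φ) (FH φ) (Coalgebra.comul (R := ℂ) x))
        = (Real.sqrt (Module.finrank ℂ H) : ℂ) • FH φ x := by
  intro x
  ext y
  rw [dmulT_apply', dualDistrib_map_FH_mul]
  have hcm : Coalgebra.comul (R := ℂ) x * Coalgebra.comul (R := ℂ) y
      = Coalgebra.comul (R := ℂ) (x * y) := by
    rw [← Bialgebra.comulAlgHom_apply ℂ H, ← Bialgebra.comulAlgHom_apply ℂ H,
      ← Bialgebra.comulAlgHom_apply ℂ H, map_mul]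
  rw [hcm, ← dmulT_apply', hφ1 φ, hφone, one_smul, LinearMap.smul_apply,
    smul_eq_mul, FH_apply_apply]
  ring

end
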